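/- arXiv:1703.10696 — 3 statements merged into one kernel-verified Lean document; each statement's English description precedes it below -/
import Mathlib

section
/- Let E be a real inner product space and e, v ∈ E unit vectors with ⟨e,v⟩ = 0. Define γ_v : ℝ → E by γ_v(t) = (-tanh t)·e + (cosh t)⁻¹·v. Then: (i) γ_v is differentiable with γ_v'(t) = -(e - ⟨e,γ_v(t)⟩·γ_v(t)) for all t; (ii) ‖γ_v(t)‖ = 1 for all t; (iii) γ_v(t) → e as t → -∞ and γ_v(t) → -e as t → +∞. -/
open Filter
open scoped RealInnerProductSpace Topology

/-! Everything reduces to `tanh² + sech² = 1` together with `tanh' = sech²` and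
`sech' = -tanh · sech`: since `e, v` are orthonormal, `⟪e, γ t⟫ = -tanh t`, so both the flow
equation and `‖γ t‖² = tanh² + sech² = 1` become this identity coefficientwise. -/

namespace Real

theorem tanh_sq_add_inv_cosh_sq (t : ℝ) : tanh t ^ 2 + (cosh t)⁻¹ ^ 2 = 1 := by
  have hc := (cosh_pos t).ne'
  rw [tanh_eq_sinh_div_cosh]
  field_simp
  linarith [cosh_sq_sub_sinh_sq t]

theorem hasDerivAt_tanh (t : ℝ) : HasDerivAt tanh ((cosh t)⁻¹ ^ 2) t := by
  have hc := (cosh_pos t).ne'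
  have h := (hasDerivAt_sinh t).div (hasDerivAt_cosh t) hc
  rw [show (cosh t * cosh t - sinh t * sinh t) / cosh t ^ 2 = (cosh t)⁻¹ ^ 2 by
    field_simp; linarith [cosh_sq_sub_sinh_sq t]] at h
  exact h.congr_of_eventuallyEq (Eventually.of_forall tanh_eq_sinh_div_cosh)

theorem hasDerivAt_inv_cosh (t : ℝ) :
    HasDerivAt (fun x => (cosh x)⁻¹) (-(tanh t * (cosh t)⁻¹)) t := by
  have h := (hasDerivAt_cosh t).inv (cosh_pos t).ne'
  rwa [show -sinh t / cosh t ^ 2 = -(tanh t * (cosh t)⁻¹) by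
    rw [tanh_eq_sinh_div_cosh]; field_simp] at h

theorem tendsto_cosh_atTop : Tendsto cosh atTop atTop :=
  tendsto_atTop_mono (fun x => by rw [cosh_eq]; linarith [exp_pos (-x)])
    (tendsto_exp_atTop.atTop_div_const two_pos)

theorem tendsto_inv_cosh_atTop : Tendsto (fun t => (cosh t)⁻¹) atTop (𝓝 0) :=
  tendsto_cosh_atTop.inv_tendsto_atTop

theorem tendsto_inv_cosh_atBot : Tendsto (fun t => (cosh t)⁻¹) atBot (𝓝 0) := by
  simpa [Function.comp_def] using tendsto_inv_cosh_atTop.comp tendsto_neg_atBot_atTop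

-- `1 - tanh t = (cosh t - sinh t) / cosh t = exp (-t) / cosh t`
theorem tendsto_tanh_atTop : Tendsto tanh atTop (𝓝 1) := by
  have h : Tendsto (fun t => 1 - exp (-t) * (cosh t)⁻¹) atTop (𝓝 (1 - 0 * 0)) :=
    tendsto_const_nhds.sub (tendsto_exp_neg_atTop_nhds_zero.mul tendsto_inv_cosh_atTop)
  refine (by simpa using h : Tendsto _ _ _).congr fun t => ?_
  rw [← cosh_sub_sinh, tanh_eq_sinh_div_cosh]
  field_simp [(cosh_pos t).ne']
  ring

theorem tendsto_tanh_atBot : Tendsto tanh atBot (𝓝 (-1)) := by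
  simpa [Function.comp_def] using (tendsto_tanh_atTop.comp tendsto_neg_atBot_atTop).neg

end Real

open Real

noncomputable def meridian {E : Type*} [AddCommGroup E] [Module ℝ E] (e v : E) (t : ℝ) : E :=
  (-tanh t) • e + (cosh t)⁻¹ • v

section Limits

variable {E : Type*} [AddCommGroup E] [Module ℝ E] [TopologicalSpace E] [ContinuousAdd E]
  [ContinuousSMul ℝ E]

theorem tendsto_meridian_atBot (e v : E) : Tendsto (meridian e v) atBot (𝓝 e) := by
  unfold meridian
  simpa using (tendsto_tanh_atBot.neg.smul_const e).add (tendsto_inv_cosh_atBot.smul_const v)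

theorem tendsto_meridian_atTop (e v : E) : Tendsto (meridian e v) atTop (𝓝 (-e)) := by
  unfold meridian
  simpa using (tendsto_tanh_atTop.neg.smul_const e).add (tendsto_inv_cosh_atTop.smul_const v)

end Limits

theorem hasDerivAt_meridian {E : Type*} [NormedAddCommGroup E] [NormedSpace ℝ E] (e v : E)
    (t : ℝ) :
    HasDerivAt (meridian e v) ((-(cosh t)⁻¹ ^ 2) • e + (-(tanh t * (cosh t)⁻¹)) • v) t :=
  ((hasDerivAt_tanh t).neg.smul_const e).add ((hasDerivAt_inv_cosh t).smul_const v)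

section Orthonormal

variable {E : Type*} [NormedAddCommGroup E] [InnerProductSpace ℝ E] {e v : E}

theorem inner_meridian_left (he : ‖e‖ = 1) (hev : ⟪e, v⟫ = 0) (t : ℝ) :
    ⟪e, meridian e v t⟫ = -tanh t := by
  simp [meridian, inner_add_right, real_inner_smul_right, he, hev]

theorem norm_meridian (he : ‖e‖ = 1) (hv : ‖v‖ = 1) (hev : ⟪e, v⟫ = 0) (t : ℝ) :
    ‖meridian e v t‖ = 1 := by
  have hperp : ⟪(-tanh t) • e, (cosh t)⁻¹ • v⟫ = 0 := by
    simp [real_inner_smul_left, real_inner_smul_right, hev]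
  have hsq : ‖meridian e v t‖ ^ 2 = 1 := by
    rw [meridian, norm_add_sq_real, hperp, norm_smul, norm_smul, he, hv]
    simpa [mul_pow] using tanh_sq_add_inv_cosh_sq t
  exact (pow_eq_one_iff_of_nonneg (norm_nonneg _) two_ne_zero).mp hsq

theorem hasDerivAt_meridian_heightFlow (he : ‖e‖ = 1) (hev : ⟪e, v⟫ = 0) (t : ℝ) :
    HasDerivAt (meridian e v) (-(e - ⟪e, meridian e v t⟫ • meridian e v t)) t := by
  convert hasDerivAt_meridian e v t using 1
  rw [inner_meridian_left he hev, meridian]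
  have h := tanh_sq_add_inv_cosh_sq t
  match_scalars <;> linarith

end Orthonormal

/-- For orthogonal unit vectors `e, v`, the explicit meridian
`γ_v(t) = (-tanh t) • e + (cosh t)⁻¹ • v` is a solution of the height flow
`γ' = -(e - ⟪e,γ⟫ • γ)` on the unit sphere running from the north pole `e`
to the south pole `-e`. -/
theorem meridian_trajectory {E : Type*}
    [NormedAddCommGroup E] [InnerProductSpace ℝ E]
    (e v : E) (he : ‖e‖ = 1) (hv : ‖v‖ = 1) (hev : ⟪e, v⟫ = 0)
    (γ : ℝ → E) (hγ : ∀ t : ℝ, γ t = (-Real.tanh t) • e + (Real.cosh t)⁻¹ • v) :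
    (∀ t : ℝ, HasDerivAt γ (-(e - ⟪e, γ t⟫ • γ t)) t) ∧
      (∀ t : ℝ, ‖γ t‖ = 1) ∧
      Tendsto γ atBot (nhds e) ∧ Tendsto γ atTop (nhds (-e)) := by
  obtain rfl : γ = meridian e v := funext hγ
  exact ⟨hasDerivAt_meridian_heightFlow he hev, norm_meridian he hv hev,
    tendsto_meridian_atBot e v, tendsto_meridian_atTop e v⟩
end

section
/- Let E be a real inner product space, e ∈ E a unit vector, and γ : ℝ → E a differentiable curve satisfying γ'(t) = -(e - ⟨e,γ(t)⟩·γ(t)) for all t ∈ ℝ. Then the orthogonal component w(t) := γ(t) - ⟨e,γ(t)⟩·e is differentiable and satisfies w'(t) = ⟨e,γ(t)⟩·w(t) for all t ∈ ℝ; in particular w(t) is for every t a nonnegative scalar multiple of w(s) for every s ≤ t along which w does not vanish. -/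
open scoped RealInnerProductSpace

/-! The height `a = ⟪e, γ⟫` obeys the Riccati equation `a' = a² - 1`, and differentiating
`w = γ - a • e` turns the flow equation into the linear equation `w' = a • w`. Its solutions are
`w t = exp (∫ s..t, a) • w s`, so `w` only ever gets rescaled by a positive factor. -/

section LinearODE

variable {E : Type*} [NormedAddCommGroup E] [NormedSpace ℝ E]

theorem eq_exp_integral_smul_of_hasDerivAt_smul {a : ℝ → ℝ} {w : ℝ → E} (ha : Continuous a)
    (hw : ∀ t, HasDerivAt w (a t • w t) t) (s t : ℝ) :
    w t = Real.exp (∫ u in s..t, a u) • w s := by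
  set A : ℝ → ℝ := fun t => ∫ u in s..t, a u
  have hA : ∀ t, HasDerivAt A (a t) t := fun t =>
    intervalIntegral.integral_hasDerivAt_right (ha.intervalIntegrable _ _)
      (ha.stronglyMeasurableAtFilter _ _) ha.continuousAt
  have hv : ∀ t, HasDerivAt (fun t => Real.exp (-A t) • w t) 0 t := fun t => by
    refine ((hA t).neg.exp.smul (hw t)).congr_deriv ?_
    rw [smul_smul]
    module
  have hconst := is_const_of_deriv_eq_zero (fun x => (hv x).differentiableAt)
    (fun x => (hv x).deriv) t s
  simp only [A, intervalIntegral.integral_same, neg_zero, Real.exp_zero, one_smul] at hconst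
  rw [← hconst, smul_smul, ← Real.exp_add, add_neg_cancel, Real.exp_zero, one_smul]

end LinearODE

section HeightFlow

variable {E : Type*} [NormedAddCommGroup E] [InnerProductSpace ℝ E] {e : E} {γ : ℝ → E}

theorem hasDerivAt_inner_of_heightFlow (he : ‖e‖ = 1)
    (hγ : ∀ t, HasDerivAt γ (-(e - ⟪e, γ t⟫ • γ t)) t) (t : ℝ) :
    HasDerivAt (fun t => ⟪e, γ t⟫) (⟪e, γ t⟫ ^ 2 - 1) t := by
  have hee : ⟪e, e⟫ = (1 : ℝ) := by rw [real_inner_self_eq_norm_sq, he, one_pow]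
  refine ((hasDerivAt_const t e).inner ℝ (hγ t)).congr_deriv ?_
  rw [inner_zero_left, add_zero, inner_neg_right, inner_sub_right, inner_smul_right, hee]
  ring

theorem hasDerivAt_equatorial_of_heightFlow (he : ‖e‖ = 1)
    (hγ : ∀ t, HasDerivAt γ (-(e - ⟪e, γ t⟫ • γ t)) t) (t : ℝ) :
    HasDerivAt (fun t => γ t - ⟪e, γ t⟫ • e) (⟪e, γ t⟫ • (γ t - ⟪e, γ t⟫ • e)) t := by
  refine ((hγ t).sub ((hasDerivAt_inner_of_heightFlow he hγ t).smul_const e)).congr_deriv ?_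
  module

end HeightFlow

/-- Along any solution of the height flow `γ' = -(e - ⟪e,γ⟫ • γ)` with `‖e‖ = 1`, the
equatorial component `w(t) = γ(t) - ⟪e,γ(t)⟫ • e` satisfies the linear equation
`w' = ⟪e,γ⟫ • w`; in particular `w(t)` is a nonnegative scalar multiple of `w(s)` for every
`s ≤ t` with `w(s) ≠ 0`. -/
theorem equatorial_component_linear {E : Type*}
    [NormedAddCommGroup E] [InnerProductSpace ℝ E]
    (e : E) (he : ‖e‖ = 1) (γ : ℝ → E)
    (hγ : ∀ t : ℝ, HasDerivAt γ (-(e - ⟪e, γ t⟫ • γ t)) t)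
    (w : ℝ → E) (hw : ∀ t : ℝ, w t = γ t - ⟪e, γ t⟫ • e) :
    (∀ t : ℝ, HasDerivAt w (⟪e, γ t⟫ • w t) t) ∧
      (∀ s t : ℝ, s ≤ t → w s ≠ 0 → ∃ c : ℝ, 0 ≤ c ∧ w t = c • w s) := by
  obtain rfl : w = fun t => γ t - ⟪e, γ t⟫ • e := funext hw
  have hw' := hasDerivAt_equatorial_of_heightFlow he hγ
  have ha : Continuous fun t => ⟪e, γ t⟫ := continuous_iff_continuousAt.2 fun t =>
    (hasDerivAt_inner_of_heightFlow he hγ t).continuousAt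
  exact ⟨hw', fun s t _ _ => ⟨_, (Real.exp_pos _).le,
    eq_exp_integral_smul_of_hasDerivAt_smul ha hw' s t⟩⟩
end

section
/- Let E be a real Hilbert space, e ∈ E a unit vector, and γ : ℝ → E a differentiable curve satisfying γ'(t) = -(e - ⟨e,γ(t)⟩·γ(t)) for all t ∈ ℝ, with ‖γ(0)‖ = 1 and γ(0) ≠ e and γ(0) ≠ -e. Then there exist a unit vector v ∈ E with ⟨e,v⟩ = 0 and a real number σ such that γ(t) = (-tanh(t+σ))·e + (cosh(t+σ))⁻¹·v for all t ∈ ℝ. -/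
open scoped RealInnerProductSpace

/-!
The height `a t = ⟪e, γ t⟫` solves the Riccati equation `a' = a² - 1`, whose solution with
`a 0 = -tanh σ` is `-tanh (t + σ)`; the equatorial part `γ t - a t • e` solves the linear
equation `w' = a • w`, as does `(cosh (t + σ))⁻¹ • v`. Both uniqueness statements reduce to the
vanishing of a solution of a scalar-coefficient linear equation that vanishes at one time.
Finally `‖v‖ = 1` follows from `‖γ 0‖ = 1` by Pythagoras and `cosh² (1 - tanh²) = 1`.
-/

open Real Set

section LinearODE

variable {F : Type*} [NormedAddCommGroup F] [NormedSpace ℝ F] {a : ℝ → ℝ} {f g : ℝ → F} {t₀ : ℝ}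

/-- Multiplying by the integrating factor `exp (-∫_{t₀}^t a)` turns `f` into a constant. -/
theorem eq_zero_of_hasDerivAt_smul (ha : Continuous a) (hf : ∀ t, HasDerivAt f (a t • f t) t)
    (h₀ : f t₀ = 0) (t : ℝ) : f t = 0 := by
  have hA : ∀ t, HasDerivAt (fun t => ∫ s in t₀..t, a s) (a t) t := fun t =>
    (ha.integral_hasStrictDerivAt t₀ t).hasDerivAt
  have hconst : ∀ t, HasDerivAt (fun t => exp (-∫ s in t₀..t, a s) • f t) 0 t := fun t =>
    ((hA t).neg.exp.smul (hf t)).congr_deriv (by rw [smul_smul, ← add_smul]; simp)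
  have := is_const_of_deriv_eq_zero (fun s => (hconst s).differentiableAt)
    (fun s => (hconst s).deriv) t t₀
  simpa [h₀, exp_ne_zero] using this

theorem eq_of_hasDerivAt_smul (ha : Continuous a) (hf : ∀ t, HasDerivAt f (a t • f t) t)
    (hg : ∀ t, HasDerivAt g (a t • g t) t) (h₀ : f t₀ = g t₀) (t : ℝ) : f t = g t :=
  sub_eq_zero.1 <| eq_zero_of_hasDerivAt_smul (f := f - g) ha
    (fun t => ((hf t).sub (hg t)).congr_deriv (smul_sub _ _ _).symm) (sub_eq_zero.2 h₀) t

end LinearODE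

theorem Real.hasDerivAt_tanh_s17 (x : ℝ) : HasDerivAt tanh (1 - tanh x ^ 2) x := by
  have h := (hasDerivAt_sinh x).div (hasDerivAt_cosh x) (cosh_pos x).ne'
  rw [show sinh / cosh = tanh from funext fun y => (tanh_eq_sinh_div_cosh y).symm] at h
  refine h.congr_deriv ?_
  rw [tanh_eq_sinh_div_cosh]; field_simp

theorem Real.hasDerivAt_inv_cosh_s17 (x : ℝ) :
    HasDerivAt (fun x => (cosh x)⁻¹) (-tanh x * (cosh x)⁻¹) x :=
  ((hasDerivAt_cosh x).inv (cosh_pos x).ne').congr_deriv (by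
    rw [tanh_eq_sinh_div_cosh]; field_simp)

theorem Real.cosh_sq_mul_one_sub_tanh_sq (x : ℝ) : cosh x ^ 2 * (1 - tanh x ^ 2) = 1 := by
  rw [tanh_eq_sinh_div_cosh]; field_simp; linarith [cosh_sq_sub_sinh_sq x]

/-- The difference `d = a + tanh (· + σ)` solves the linear equation
`d' = (a - tanh (· + σ)) d`. -/
theorem eq_neg_tanh_of_hasDerivAt {a : ℝ → ℝ} {σ : ℝ} (ha : ∀ t, HasDerivAt a (a t ^ 2 - 1) t)
    (h₀ : a 0 = -tanh σ) (t : ℝ) : a t = -tanh (t + σ) := by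
  set b : ℝ → ℝ := fun t => -tanh (t + σ)
  have hb : ∀ t, HasDerivAt b (b t ^ 2 - 1) t := fun t =>
    ((hasDerivAt_tanh_s17 (t + σ)).comp_add_const t σ).neg.congr_deriv (by ring)
  have hcont : Continuous fun t => a t + b t :=
    continuous_iff_continuousAt.2 fun t => (ha t).continuousAt.add (hb t).continuousAt
  refine sub_eq_zero.1 (eq_zero_of_hasDerivAt_smul (f := a - b) (t₀ := 0) hcont (fun t => ?_)
    (by simp [b, h₀]) t)
  exact ((ha t).sub (hb t)).congr_deriv (by simp only [Pi.sub_apply, smul_eq_mul]; ring)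

theorem norm_sub_inner_smul_sq {E : Type*} [NormedAddCommGroup E] [InnerProductSpace ℝ E]
    {e : E} (he : ‖e‖ = 1) (x : E) : ‖x - ⟪e, x⟫ • e‖ ^ 2 = ‖x‖ ^ 2 - ⟪e, x⟫ ^ 2 := by
  rw [norm_sub_sq_real, real_inner_smul_right, real_inner_comm, norm_smul, he, norm_eq_abs,
    mul_one, sq_abs]
  ring

theorem real_inner_mem_Ioo_of_norm_eq_one {E : Type*} [NormedAddCommGroup E]
    [InnerProductSpace ℝ E] {x y : E} (hx : ‖x‖ = 1) (hy : ‖y‖ = 1) (hxy : y ≠ x) (hxy' : y ≠ -x) :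
    ⟪x, y⟫ ∈ Ioo (-1) 1 :=
  ⟨(neg_one_le_real_inner_of_norm_eq_one hx hy).lt_of_ne fun h =>
      hxy' (((inner_eq_neg_one_iff_of_norm_eq_one hy hx).1 (real_inner_comm x y ▸ h.symm))),
    (real_inner_le_one_of_norm_eq_one hx hy).lt_of_ne fun h =>
      hxy ((inner_eq_one_iff_of_norm_eq_one hx hy).1 h).symm⟩

section HeightFlow

variable {E : Type*} [NormedAddCommGroup E] [InnerProductSpace ℝ E]

def IsHeightFlow (e : E) (γ : ℝ → E) : Prop :=
  ∀ t, HasDerivAt γ (-(e - ⟪e, γ t⟫ • γ t)) t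

variable {e : E} {γ : ℝ → E}

theorem IsHeightFlow.hasDerivAt_inner (hγ : IsHeightFlow e γ) (he : ‖e‖ = 1) (t : ℝ) :
    HasDerivAt (fun t => ⟪e, γ t⟫) (⟪e, γ t⟫ ^ 2 - 1) t :=
  ((hasDerivAt_const t e).inner ℝ (hγ t)).congr_deriv (by
    simp [inner_sub_right, real_inner_smul_right, he]; ring)

theorem IsHeightFlow.hasDerivAt_sub_inner_smul (hγ : IsHeightFlow e γ) (he : ‖e‖ = 1) (t : ℝ) :
    HasDerivAt (fun t => γ t - ⟪e, γ t⟫ • e) (⟪e, γ t⟫ • (γ t - ⟪e, γ t⟫ • e)) t :=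
  ((hγ t).sub ((hγ.hasDerivAt_inner he t).smul_const e)).congr_deriv (by module)

end HeightFlow

theorem heightFlow_classification_general {E : Type*}
    [NormedAddCommGroup E] [InnerProductSpace ℝ E]
    (e : E) (he : ‖e‖ = 1) (γ : ℝ → E)
    (hγ : ∀ t : ℝ, HasDerivAt γ (-(e - ⟪e, γ t⟫ • γ t)) t)
    (h0 : ‖γ 0‖ = 1) (hne : γ 0 ≠ e) (hne' : γ 0 ≠ -e) :
    ∃ v : E, ‖v‖ = 1 ∧ ⟪e, v⟫ = 0 ∧
      ∃ σ : ℝ, ∀ t : ℝ,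
        γ t = (-Real.tanh (t + σ)) • e + (Real.cosh (t + σ))⁻¹ • v := by
  have ha' := IsHeightFlow.hasDerivAt_inner hγ he
  have ha₀ : -⟪e, γ 0⟫ ∈ Ioo (-1) 1 := by
    obtain ⟨h₁, h₂⟩ := real_inner_mem_Ioo_of_norm_eq_one he h0 hne hne'
    constructor <;> linarith
  obtain ⟨σ, -, hσ⟩ := tanh_surjOn ha₀
  have ha : ∀ t, ⟪e, γ t⟫ = -tanh (t + σ) := eq_neg_tanh_of_hasDerivAt ha' (by simp [hσ])
  set w₀ := γ 0 - ⟪e, γ 0⟫ • e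
  have hw : ∀ t, γ t - ⟪e, γ t⟫ • e = (cosh (t + σ))⁻¹ • cosh σ • w₀ :=
    eq_of_hasDerivAt_smul (t₀ := 0) (continuous_iff_continuousAt.2 fun t => (ha' t).continuousAt)
      (IsHeightFlow.hasDerivAt_sub_inner_smul hγ he)
      (fun t => (((hasDerivAt_inv_cosh_s17 (t + σ)).comp_add_const t σ).smul_const _).congr_deriv
        (by rw [ha]; module))
      (by simp [(cosh_pos σ).ne', w₀])
  refine ⟨cosh σ • w₀, ?_, ?_, σ, fun t => ?_⟩
  · have hw₀ : ‖w₀‖ ^ 2 = 1 - tanh σ ^ 2 := by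
      rw [norm_sub_inner_smul_sq he, h0, ha 0, zero_add]; ring
    rw [← pow_eq_one_iff_of_nonneg (norm_nonneg _) two_ne_zero, norm_smul, mul_pow, hw₀,
      norm_eq_abs, sq_abs, cosh_sq_mul_one_sub_tanh_sq]
  · simp [w₀, inner_sub_right, real_inner_smul_right, he]
  · rw [← ha, ← hw]; simp

/-- Every nonconstant solution of the height flow `γ' = -(e - ⟪e,γ⟫ • γ)` on the unit sphere
is, up to a time shift `σ`, the explicit meridian through an equatorial unit vector `v`. -/
theorem heightFlow_classification {E : Type*}
    [NormedAddCommGroup E] [InnerProductSpace ℝ E] [CompleteSpace E]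
    (e : E) (he : ‖e‖ = 1) (γ : ℝ → E)
    (hγ : ∀ t : ℝ, HasDerivAt γ (-(e - ⟪e, γ t⟫ • γ t)) t)
    (h0 : ‖γ 0‖ = 1) (hne : γ 0 ≠ e) (hne' : γ 0 ≠ -e) :
    ∃ v : E, ‖v‖ = 1 ∧ ⟪e, v⟫ = 0 ∧
      ∃ σ : ℝ, ∀ t : ℝ,
        γ t = (-Real.tanh (t + σ)) • e + (Real.cosh (t + σ))⁻¹ • v :=
  heightFlow_classification_general e he γ hγ h0 hne hne'
end
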